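/- arXiv:2310.00323 — 6 statements merged into one kernel-verified Lean document; each statement's English description precedes it below -/
import Mathlib

section
/- The Vandermonde-type identity: ∏_{k=1}^n (x_k - t) · det(x_j^{ν_i + n - i})_{i,j} = ∑_{ε ∈ {0,1}^n} (-t)^{n-|ε|} det(x_j^{ν_i + n - i + ε_i})_{i,j}, where |ε| = ∑_i ε_i. -/
/-- Vandermonde-type identity:
`∏ (x k - t) · det(x_j^{ν_i + n - i}) = ∑_{ε ∈ {0,1}^n} (-t)^{n-|ε|} det(x_j^{ν_i+n-i+ε_i})`,
where the subset `S` records the indices with `ε_i = 1`. -/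
theorem prod_mul_det_eq_sum_det {F : Type*} [Field F] (n : ℕ) (x : Fin n → F) (t : F)
    (ν : Fin n → ℕ) :
    (∏ k, (x k - t)) *
        (Matrix.of fun i j : Fin n => x j ^ (ν i + (n - 1 - i.val))).det =
      ∑ S : Finset (Fin n), (-t) ^ (n - S.card) *
        (Matrix.of fun i j : Fin n =>
          x j ^ (ν i + (n - 1 - i.val) + (if i ∈ S then 1 else 0))).det := by
  classical
  set a : Fin n → ℕ := fun i => ν i + (n - 1 - i.val) with ha
  -- rows
  set u : Fin n → Fin n → F := fun i j => x j ^ (a i + 1) with hu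
  set w : Fin n → Fin n → F := fun i j => x j ^ (a i) with hw
  have key : (∏ k, (x k - t)) * (Matrix.of fun i j : Fin n => x j ^ a i).det =
      (Matrix.detRowAlternating (R := F) (n := Fin n)).toMultilinearMap (u + fun i => (-t) • w i) := by
    rw [← Matrix.det_mul_row (fun j => x j - t)]
    congr 1
    ext i j
    simp only [Matrix.of_apply, hu, hw, Pi.add_apply, Pi.smul_apply, smul_eq_mul]
    ring
  rw [key, MultilinearMap.map_add_univ]
  refine Finset.sum_congr rfl fun S _ => ?_
  have hpiece : S.piecewise u (fun i => (-t) • w i) =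
      Sᶜ.piecewise (fun i => (-t) • (S.piecewise u w) i) (S.piecewise u w) := by
    ext i j
    by_cases h : i ∈ S <;> simp [Finset.piecewise, h]
  rw [hpiece, MultilinearMap.map_piecewise_smul]
  simp only [Finset.prod_const, smul_eq_mul, Finset.card_compl, Fintype.card_fin]
  have harg : S.piecewise u w = Matrix.of fun i j : Fin n =>
      x j ^ (ν i + (n - 1 - i.val) + (if i ∈ S then 1 else 0)) := by
    ext i j
    by_cases h : i ∈ S <;> simp [Finset.piecewise, h, hu, hw, ha]
  rw [harg]
  rfl
end

section
/- The relative Pieri formula for GL(n): for a partition ν (weakly decreasing tuple of nonnegative integers of length n), s_ν(x) · ∏_{i=1}^n (x_i - t) = ∑_{ε ∈ {0,1}^n, ν+ε a partition} (-t)^{n-|ε|} s_{ν+ε}(x), where s_μ denotes the Schur polynomial in x_1,...,x_n. -/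
lemma exists_switch {P : ℕ → Prop} [DecidablePred P] {i j : ℕ} (hij : i ≤ j)
    (h0 : ¬ P i) (h1 : P j) : ∃ k, i ≤ k ∧ k < j ∧ ¬ P k ∧ P (k + 1) := by
  induction j, hij using Nat.le_induction with
  | base => exact absurd h1 h0
  | succ m hm ih =>
    by_cases hPm : P m
    · obtain ⟨k, hk1, hk2, hk3, hk4⟩ := ih hPm
      exact ⟨k, hk1, hk2.trans (Nat.lt_succ_self m), hk3, hk4⟩
    · exact ⟨m, hm, Nat.lt_succ_self m, hPm, h1⟩

lemma vanish_bad {F : Type*} [Field F] {n : ℕ} (x : Fin n → F)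
    {ν : Fin n → ℕ} (hν : Antitone ν) (S : Finset (Fin n))
    (hbad : ¬ ∀ i j : Fin n, i ≤ j →
        ν j + (if j ∈ S then 1 else 0) ≤ ν i + (if i ∈ S then 1 else 0)) :
    (Matrix.of fun i j : Fin n =>
        x j ^ ((ν i + if i ∈ S then 1 else 0) + (n - 1 - i.val))).det = 0 := by
  push_neg at hbad
  obtain ⟨i, j, hij, hlt⟩ := hbad
  have hνji : ν j ≤ ν i := hν hij
  have hεi : (if i ∈ S then 1 else 0) = 0 := by
    have h1 : (if j ∈ S then 1 else 0) ≤ 1 := by split <;> omega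
    have h2 : (if i ∈ S then 1 else 0) = 0 ∨ (if i ∈ S then 1 else 0) = 1 := by
      split <;> omega
    omega
  have hεj : (if j ∈ S then 1 else 0) = 1 := by
    have h2 : (if j ∈ S then 1 else 0) = 0 ∨ (if j ∈ S then 1 else 0) = 1 := by
      split <;> omega
    omega
  have hiS : i ∉ S := by by_contra h; simp [h] at hεi
  have hjS : j ∈ S := by by_contra h; simp [h] at hεj
  have hνeq : ν i = ν j := by omega
  have hijlt : i.val < j.val := by
    rcases lt_or_eq_of_le hij with h | h
    · exact h
    · subst h; omega
  obtain ⟨k, hk1, hk2, hk3, hk4⟩ :=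
    exists_switch (P := fun m => ∀ hm : m < n, (⟨m, hm⟩ : Fin n) ∈ S)
      (le_of_lt hijlt) (fun h => hiS (h i.isLt)) (fun _ => hjS)
  have hkn : k < n := lt_trans hk2 j.isLt
  have hk1n : k + 1 < n := lt_of_le_of_lt hk2 j.isLt
  set a : Fin n := ⟨k, hkn⟩
  set b : Fin n := ⟨k + 1, hk1n⟩
  have haS : a ∉ S := fun h => hk3 (fun _ => h)
  have hbS : b ∈ S := hk4 hk1n
  have hνa : ν a = ν i := le_antisymm (hν (by simpa [a, Fin.le_def] using hk1))
    (by rw [hνeq]; exact hν (by simp [a, Fin.le_def]; omega))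
  have hνb : ν b = ν i := le_antisymm (hν (by simp [b, Fin.le_def]; omega))
    (by rw [hνeq]; exact hν (by simp [b, Fin.le_def]; omega))
  apply Matrix.det_zero_of_row_eq (i := a) (j := b)
  · exact fun h => by simp [a, b, Fin.ext_iff] at h
  · funext c
    show x c ^ _ = x c ^ _
    congr 1
    simp only [haS, hbS, if_neg, if_pos, ite_true, ite_false]
    simp only [a, b] at hνa hνb ⊢
    omega

lemma expand_det {F : Type*} [Field F] {n : ℕ} (x : Fin n → F) (t : F) (ν : Fin n → ℕ) :
    (Matrix.of fun i j : Fin n => (x j - t) * x j ^ (ν i + (n - 1 - i.val))).det =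
      ∑ S : Finset (Fin n), (-t) ^ (n - S.card) *
        (Matrix.of fun i j : Fin n =>
          x j ^ ((ν i + if i ∈ S then 1 else 0) + (n - 1 - i.val))).det := by
  classical
  set A : Fin n → (Fin n → F) := fun i j => x j ^ (ν i + (n - 1 - i.val) + 1) with hA
  set B : Fin n → (Fin n → F) := fun i j => (-t) * x j ^ (ν i + (n - 1 - i.val)) with hB
  have hM : (Matrix.of fun i j : Fin n => (x j - t) * x j ^ (ν i + (n - 1 - i.val)))
      = Matrix.of (A + B) := by
    ext i j
    simp only [Matrix.of_apply, Pi.add_apply, hA, hB, pow_succ]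
    ring
  rw [hM]
  have hdet : (Matrix.of (A + B)).det
      = (Matrix.detRowAlternating : AlternatingMap F (Fin n → F) F (Fin n)).toMultilinearMap
          (A + B) := rfl
  rw [hdet, MultilinearMap.map_add_univ]
  refine Finset.sum_congr rfl fun S _ => ?_
  have hpw : S.piecewise A B = Sᶜ.piecewise
      (fun i => (-t) • ((fun i j => x j ^ ((ν i + if i ∈ S then 1 else 0) + (n - 1 - i.val))) i))
      (fun i j => x j ^ ((ν i + if i ∈ S then 1 else 0) + (n - 1 - i.val))) := by
    funext i
    by_cases h : i ∈ S
    · funext j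
      simp only [Finset.piecewise, h, Finset.mem_compl, not_true, if_true, if_false,
        ite_true, ite_false, hA]
      congr 1
      omega
    · funext j
      simp only [Finset.piecewise, h, Finset.mem_compl, not_false_iff, if_true, if_false,
        ite_true, ite_false, hB, Pi.smul_apply, smul_eq_mul, add_zero]
  rw [hpw, MultilinearMap.map_piecewise_smul]
  simp only [Finset.prod_const, Finset.card_compl, Fintype.card_fin, smul_eq_mul]
  rfl

/-- Schur polynomial as a ratio of determinants. -/
noncomputable def schurN {F : Type*} [Field F] (n : ℕ) (x : Fin n → F) (μ : Fin n → ℕ) : F :=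
  (Matrix.of fun i j : Fin n => x j ^ (μ i + (n - 1 - i.val))).det /
    (Matrix.of fun i j : Fin n => x j ^ (n - 1 - i.val)).det

/-- Relative Pieri formula for `GL(n)`:
`s_ν(x) ∏ (x_i - t) = ∑_{ε ∈ {0,1}^n, ν+ε partition} (-t)^{n-|ε|} s_{ν+ε}(x)`. -/
theorem relative_pieri_gl {F : Type*} [Field F] (n : ℕ) (x : Fin n → F) (t : F)
    (ν : Fin n → ℕ) (hν : Antitone ν) :
    schurN n x ν * ∏ i, (x i - t) =
      ∑ S : Finset (Fin n),
        if ∀ i j : Fin n, i ≤ j →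
            ν j + (if j ∈ S then 1 else 0) ≤ ν i + (if i ∈ S then 1 else 0) then
          (-t) ^ (n - S.card) * schurN n x (fun i => ν i + if i ∈ S then 1 else 0)
        else 0 := by
  classical
  set D : F := (Matrix.of fun i j : Fin n => x j ^ (n - 1 - i.val)).det with hD
  have lhs_eq : schurN n x ν * ∏ i, (x i - t) =
      (Matrix.of fun i j : Fin n => (x j - t) * x j ^ (ν i + (n - 1 - i.val))).det / D := by
    have key := Matrix.det_mul_row (fun j => x j - t)
      (Matrix.of fun i j : Fin n => x j ^ (ν i + (n - 1 - i.val)))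
    simp only [Matrix.of_apply] at key
    rw [key]
    simp only [schurN, ← hD]
    rw [div_mul_eq_mul_div, mul_comm]
  rw [lhs_eq, expand_det]
  rw [Finset.sum_div]
  refine Finset.sum_congr rfl fun S _ => ?_
  by_cases h : ∀ i j : Fin n, i ≤ j →
      ν j + (if j ∈ S then 1 else 0) ≤ ν i + (if i ∈ S then 1 else 0)
  · rw [if_pos h]
    simp only [schurN, ← hD]
    rw [mul_div_assoc]
  · rw [if_neg h, vanish_bad x hν S h]
    simp
end

section
/- The dual Pieri formula: for a partition ν of length at most n and 0 ≤ k ≤ n, s_ν(x_1,...,x_n) · e_k(x_1,...,x_n) = ∑ s_{ν+ε}(x_1,...,x_n), where the sum is over ε ∈ {0,1}^n with |ε| = k such that ν + ε is a partition. -/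
open Finset

section Alternant

variable {ι R : Type*} [Fintype ι] [CommRing R]

theorem sum_powersetCard_prod_comp_perm (k : ℕ) (σ : Equiv.Perm ι) (x : ι → R) :
    ∑ S ∈ powersetCard k (univ : Finset ι), ∏ i ∈ S, x (σ i) =
      ∑ S ∈ powersetCard k (univ : Finset ι), ∏ i ∈ S, x i := by
  conv_rhs => rw [← map_univ_equiv σ, powersetCard_map, sum_map]
  simp [prod_map]

theorem prod_pow_mul_prod_eq_prod_pow_add_indicator [DecidableEq ι] (y : ι → R) (e : ι → ℕ) (S : Finset ι) :
    (∏ i, y i ^ e i) * ∏ i ∈ S, y i = ∏ i, y i ^ (e i + if i ∈ S then 1 else 0) := by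
  simp only [pow_add, prod_mul_distrib, pow_ite, pow_one, pow_zero, prod_ite_mem, univ_inter]

theorem det_pow_mul_esymm [DecidableEq ι] (k : ℕ) (x : ι → R) (e : ι → ℕ) :
    (Matrix.of fun i j : ι => x j ^ e i).det * ∑ S ∈ powersetCard k univ, ∏ j ∈ S, x j =
      ∑ S ∈ powersetCard k univ,
        (Matrix.of fun i j : ι => x j ^ (e i + if i ∈ S then 1 else 0)).det := by
  simp only [← Matrix.det_transpose (Matrix.of _), Matrix.det_apply', Matrix.transpose_apply,
    Matrix.of_apply, sum_mul]
  rw [sum_comm]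
  refine sum_congr rfl fun σ _ => ?_
  rw [← sum_powersetCard_prod_comp_perm k σ, mul_assoc, mul_sum]
  simp only [prod_pow_mul_prod_eq_prod_pow_add_indicator, mul_sum]

theorem det_pow_eq_zero_of_not_injective [DecidableEq ι] (x : ι → R) {e : ι → ℕ} (he : ¬ e.Injective) :
    (Matrix.of fun i j : ι => x j ^ e i).det = 0 := by
  obtain ⟨i, j, hij, hne⟩ := Function.not_injective_iff.mp he
  exact Matrix.det_zero_of_row_eq hne (funext fun l => by simp [hij])

end Alternant

theorem not_injective_add_staircase_of_not_antitone {n : ℕ} {ν ε : Fin n → ℕ} (hν : Antitone ν)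
    (hε : ∀ i, ε i ≤ 1) (h : ¬ Antitone (ν + ε)) :
    ¬ Function.Injective fun i : Fin n => ν i + (n - 1 - i.val) + ε i := by
  obtain _ | m := n
  · exact absurd (Subsingleton.antitone _) h
  obtain ⟨i, hi⟩ : ∃ i : Fin m, (ν + ε) i.castSucc < (ν + ε) i.succ := by
    simpa [Fin.antitone_iff_succ_le] using h
  have hν_le := hν (Fin.castSucc_lt_succ (i := i)).le
  have hε_castSucc := hε i.castSucc
  have hε_succ := hε i.succ
  have hi_lt := i.isLt
  simp only [Pi.add_apply] at hi
  refine fun hinj => (Fin.castSucc_lt_succ (i := i)).ne (hinj ?_)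
  simp only [Fin.val_castSucc, Fin.val_succ]
  omega

theorem dual_pieri_gl_general {F : Type*} [Field F] (n : ℕ) (x : Fin n → F)
    (ν : Fin n → ℕ) (hν : Antitone ν) (k : ℕ) :
    schurN n x ν *
        ∑ S ∈ Finset.powersetCard k (Finset.univ : Finset (Fin n)), ∏ j ∈ S, x j =
      ∑ S ∈ Finset.powersetCard k (Finset.univ : Finset (Fin n)),
        if ∀ i j : Fin n, i ≤ j →
            ν j + (if j ∈ S then 1 else 0) ≤ ν i + (if i ∈ S then 1 else 0) then
          schurN n x (fun i => ν i + if i ∈ S then 1 else 0)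
        else 0 := by
  rw [schurN, div_mul_eq_mul_div, det_pow_mul_esymm, sum_div]
  refine sum_congr rfl fun S _ => ?_
  split_ifs with hpartition
  · simp only [schurN, add_right_comm]
  · rw [det_pow_eq_zero_of_not_injective x (not_injective_add_staircase_of_not_antitone hν
      (fun i => by split_ifs <;> simp) hpartition), zero_div]

/-- Dual Pieri formula: `s_ν · e_k = ∑ s_{ν+ε}` over `ε ∈ {0,1}^n`, `|ε| = k`, with
`ν + ε` a partition. -/
theorem dual_pieri_gl {F : Type*} [Field F] (n : ℕ) (x : Fin n → F)
    (ν : Fin n → ℕ) (hν : Antitone ν) (k : ℕ) (hk : k ≤ n) :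
    schurN n x ν *
        ∑ S ∈ Finset.powersetCard k (Finset.univ : Finset (Fin n)), ∏ j ∈ S, x j =
      ∑ S ∈ Finset.powersetCard k (Finset.univ : Finset (Fin n)),
        if ∀ i j : Fin n, i ≤ j →
            ν j + (if j ∈ S then 1 else 0) ≤ ν i + (if i ∈ S then 1 else 0) then
          schurN n x (fun i => ν i + if i ∈ S then 1 else 0)
        else 0 :=
  dual_pieri_gl_general n x ν hν k
end

section
/- For an n-tuple l of integers or half-integers: ∏_{k=1}^n (x_k^{1/2} − x_k^{−1/2}) · D⁻(l) = ∑_{ε ∈ {±1}^n} (∏_i ε_i) · D⁺(l + ε/2), where D⁺, D⁻ are as defined, and l + ε/2 shifts each entry l_i by ε_i/2. -/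
/-- `D⁺`, with `y i = x_i^{1/2}` a fixed square root and exponents doubled:
`Dplus y L = det(x_j^{l_i} + x_j^{-l_i})` where `l = L/2`. -/
noncomputable def Dplus {R : Type*} [CommRing R] {n : ℕ} (y : Fin n → Rˣ) (L : Fin n → ℤ) : R :=
  (Matrix.of fun i j : Fin n => ((y j ^ L i : Rˣ) : R) + ((y j ^ (-L i) : Rˣ) : R)).det

/-- `D⁻`, with doubled exponents in the square-root variables. -/
noncomputable def Dminus {R : Type*} [CommRing R] {n : ℕ} (y : Fin n → Rˣ) (L : Fin n → ℤ) : R :=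
  (Matrix.of fun i j : Fin n => ((y j ^ L i : Rˣ) : R) - ((y j ^ (-L i) : Rˣ) : R)).det

/-- `∏ (x_k^{1/2} - x_k^{-1/2}) · D⁻(l) = ∑_{ε ∈ {±1}^n} (∏ ε_i) D⁺(l + ε/2)`, stated in
the square-root variables `y` with doubled exponents `L = 2l` (so `l + ε/2` becomes
`L + ε`); the sign pattern is recorded by the subset `S` of indices with `ε_i = -1`,
and `∏ ε_i = (-1)^{|S|}`. -/
theorem prod_mul_Dminus_eq_sum_Dplus {R : Type*} [CommRing R] (n : ℕ) (y : Fin n → Rˣ)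
    (L : Fin n → ℤ) :
    (∏ k, ((y k : R) - (((y k)⁻¹ : Rˣ) : R))) * Dminus y L =
      ∑ S : Finset (Fin n), (-1 : R) ^ S.card *
        Dplus y (fun i => L i + (if i ∈ S then -1 else 1)) := by
  classical
  set P : Fin n → Fin n → R :=
    fun i j => ((y j ^ (L i + 1) : Rˣ) : R) + ((y j ^ (-(L i + 1)) : Rˣ) : R) with hP
  set Q : Fin n → Fin n → R :=
    fun i j => ((y j ^ (L i - 1) : Rˣ) : R) + ((y j ^ (-(L i - 1)) : Rˣ) : R) with hQ
  have key : ∀ i j, ((y j : R) - (((y j)⁻¹ : Rˣ) : R)) *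
      (((y j ^ L i : Rˣ) : R) - ((y j ^ (-L i) : Rˣ) : R)) = P i j - Q i j := by
    intro i j
    have h1 : (y j ^ (L i + 1) : Rˣ) = y j ^ L i * y j := by rw [zpow_add_one]
    have h2 : (y j ^ (-(L i + 1)) : Rˣ) = y j ^ (-L i) * (y j)⁻¹ := by
      rw [show -(L i + 1) = -L i - 1 by ring, zpow_sub_one]
    have h3 : (y j ^ (L i - 1) : Rˣ) = y j ^ L i * (y j)⁻¹ := by rw [zpow_sub_one]
    have h4 : (y j ^ (-(L i - 1)) : Rˣ) = y j ^ (-L i) * y j := by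
      rw [show -(L i - 1) = -L i + 1 by ring, zpow_add_one]
    simp only [hP, hQ, h1, h2, h3, h4, Units.val_mul]
    ring
  have hL : (∏ k, ((y k : R) - (((y k)⁻¹ : Rˣ) : R))) * Dminus y L =
      (Matrix.detRowAlternating : (Fin n → R) [⋀^Fin n]→ₗ[R] R) (fun i => P i - Q i) := by
    rw [Dminus, ← Matrix.det_mul_row (fun k => ((y k : R) - (((y k)⁻¹ : Rˣ) : R)))]
    congr 1
    ext i j
    simpa using key i j
  rw [hL]
  have hsub : (fun i => P i - Q i) = (fun i => (-1 : R) • Q i) + P := by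
    funext i; funext j; simp [sub_eq_neg_add]
  rw [hsub]
  erw [(Matrix.detRowAlternating :
      (Fin n → R) [⋀^Fin n]→ₗ[R] R).toMultilinearMap.map_add_univ (fun i => (-1 : R) • Q i) P]
  refine Finset.sum_congr rfl fun S _ => ?_
  have hpw : S.piecewise (fun i => (-1 : R) • Q i) P =
      S.piecewise (fun i => (-1 : R) • (S.piecewise Q P) i) (S.piecewise Q P) := by
    funext i
    by_cases h : i ∈ S <;> simp [Finset.piecewise, h]
  rw [hpw]
  rw [(Matrix.detRowAlternating : (Fin n → R) [⋀^Fin n]→ₗ[R] R).toMultilinearMap.map_piecewise_smul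
    (fun _ => (-1 : R)) (S.piecewise Q P) S]
  rw [Finset.prod_const, smul_eq_mul]
  congr 1
  show Matrix.det (Matrix.of (S.piecewise Q P)) = _
  rw [Dplus]
  congr 1
  ext i j
  by_cases h : i ∈ S <;> simp [Finset.piecewise, h, hP, hQ, sub_eq_add_neg]
end

section
/- For an n-tuple l of integers or half-integers: ∏_{k=1}^n (x_k^{1/2} − x_k^{−1/2}) · D⁺(l) = ∑_{ε ∈ {±1}^n} (∏_i ε_i) · D⁻(l + ε/2). -/
/-- `∏ (x_k^{1/2} - x_k^{-1/2}) · D⁺(l) = ∑_{ε ∈ {±1}^n} (∏ ε_i) D⁻(l + ε/2)`, stated in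
the square-root variables `y` with doubled exponents `L = 2l`; the sign pattern is
recorded by the subset `S` of indices with `ε_i = -1`. -/
theorem prod_mul_Dplus_eq_sum_Dminus {R : Type*} [CommRing R] (n : ℕ) (y : Fin n → Rˣ)
    (L : Fin n → ℤ) :
    (∏ k, ((y k : R) - (((y k)⁻¹ : Rˣ) : R))) * Dplus y L =
      ∑ S : Finset (Fin n), (-1 : R) ^ S.card *
        Dminus y (fun i => L i + (if i ∈ S then -1 else 1)) := by
  classical
  -- rows of Dminus with exponents L i + 1 and L i - 1
  set rp : Fin n → Fin n → R := fun i j =>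
    ((y j ^ (L i + 1) : Rˣ) : R) - ((y j ^ (-(L i + 1)) : Rˣ) : R) with hrp
  set rm : Fin n → Fin n → R := fun i j =>
    ((y j ^ (L i - 1) : Rˣ) : R) - ((y j ^ (-(L i - 1)) : Rˣ) : R) with hrm
  have key : (∏ k, ((y k : R) - (((y k)⁻¹ : Rˣ) : R))) * Dplus y L =
      Matrix.detRowAlternating ((fun i => -(rm i)) + rp) := by
    rw [Dplus, ← Matrix.det_mul_row (fun k => ((y k : R) - (((y k)⁻¹ : Rˣ) : R)))]
    congr 1
    ext i j
    have h1 : (y j ^ (L i + 1) : Rˣ) = y j ^ L i * y j := by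
      rw [zpow_add, zpow_one]
    have h2 : (y j ^ (-(L i + 1)) : Rˣ) = y j ^ (-L i) * (y j)⁻¹ := by
      rw [neg_add, zpow_add, zpow_neg_one]
    have h3 : (y j ^ (L i - 1) : Rˣ) = y j ^ L i * (y j)⁻¹ := by
      rw [sub_eq_add_neg, zpow_add, zpow_neg_one]
    have h4 : (y j ^ (-(L i - 1)) : Rˣ) = y j ^ (-L i) * y j := by
      rw [neg_sub, sub_eq_add_neg, add_comm, zpow_add, zpow_one, mul_comm]
    simp only [Matrix.of_apply, Pi.add_apply, Pi.neg_apply, hrp, hrm, h1, h2, h3, h4,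
      Units.val_mul]
    ring
  rw [key,
    show Matrix.detRowAlternating ((fun i => -(rm i)) + rp) =
      (Matrix.detRowAlternating (R := R) (n := Fin n)).toMultilinearMap
        ((fun i => -(rm i)) + rp) from rfl,
    MultilinearMap.map_add_univ]
  refine Finset.sum_congr rfl fun S _ => ?_
  have hpw : (S.piecewise (fun i => -(rm i)) rp : Fin n → Fin n → R) =
      fun i => (if i ∈ S then (-1 : R) else 1) • (S.piecewise rm rp i) := by
    funext i
    by_cases h : i ∈ S <;> simp [Finset.piecewise, h]
  rw [hpw, MultilinearMap.map_smul_univ, smul_eq_mul]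
  congr 1
  · rw [Finset.prod_ite_mem, Finset.univ_inter, Finset.prod_const]
  · show Matrix.detRowAlternating _ = _
    rw [Dminus]
    congr 1
    funext i j
    by_cases h : i ∈ S <;>
      simp [Finset.piecewise, h, hrm, hrp, sub_eq_add_neg]
end

section
/- The branching rule for Spin(2n) restricted to Spin(2n−1): for a dominant weight λ = (λ_1,...,λ_n) of Spin(2n) (all integers or all half-integers, λ_1 ≥ ... ≥ λ_{n−1} ≥ λ_n ≥ 0), the character identity χ^{D_n}_λ|_{x_n=1} = ∑_{μ ⪯ λ} χ^{B_{n−1}}_μ holds, where the sum is over dominant weights μ of Spin(2n−1) with λ_1 ≥ μ_1 ≥ λ_2 ≥ ... ≥ μ_{n−1} ≥ λ_n. -/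
open Finset

/-- For `a ≡ b [ZMOD 2]` and `b ≤ a` this is `{b + 1, b + 3, …, a - 1}`. -/
noncomputable def oddOffsetIoo (b a : ℤ) : Finset ℤ := (Ioo b a).filter fun m => (m - b) % 2 = 1

theorem sum_oddOffsetIoo_sub {G : Type*} [AddCommGroup G] (g : ℤ → G) {a b : ℤ} (hba : b ≤ a)
    (hab : (a - b) % 2 = 0) :
    ∑ m ∈ oddOffsetIoo b a, (g (m + 1) - g (m - 1)) = g a - g b := by
  obtain ⟨k, rfl⟩ : ∃ k : ℕ, a = b + 2 * k := ⟨((a - b) / 2).toNat, by omega⟩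
  clear hba hab
  induction k with
  | zero => simp [oddOffsetIoo]
  | succ k ih =>
    have hinsert : oddOffsetIoo b (b + 2 * (k + 1 : ℕ)) =
        insert (b + 2 * k + 1) (oddOffsetIoo b (b + 2 * k)) := by
      ext m
      simp only [oddOffsetIoo, mem_filter, mem_Ioo, mem_insert]
      omega
    rw [hinsert, sum_insert (by simp [oddOffsetIoo]), ih, add_sub_cancel_right,
      show b + 2 * k + 1 + 1 = b + 2 * (k + 1 : ℕ) by push_cast; ring]
    abel

namespace Units

variable {R : Type*} [CommRing R]

def symZpow (y : Rˣ) (k : ℤ) : R := ((y ^ k : Rˣ) : R) + ((y ^ (-k) : Rˣ) : R)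

def altZpow (y : Rˣ) (k : ℤ) : R := ((y ^ k : Rˣ) : R) - ((y ^ (-k) : Rˣ) : R)

theorem symZpow_add_one_sub_symZpow_sub_one (y : Rˣ) (m : ℤ) :
    y.symZpow (m + 1) - y.symZpow (m - 1) = y.altZpow 1 * y.altZpow m := by
  simp only [symZpow, altZpow, neg_add, neg_sub', zpow_add, zpow_sub, zpow_neg, zpow_one,
    inv_inv]
  push_cast
  ring

theorem symZpow_sub_symZpow (y : Rˣ) {a b : ℤ} (hba : b ≤ a) (hab : (a - b) % 2 = 0) :
    y.symZpow a - y.symZpow b = ∑ m ∈ oddOffsetIoo b a, y.altZpow 1 * y.altZpow m := by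
  rw [← sum_oddOffsetIoo_sub _ hba hab]
  simp only [symZpow_add_one_sub_symZpow_sub_one]

@[simp] theorem symZpow_one_left (k : ℤ) : (1 : Rˣ).symZpow k = 2 := by
  simp [symZpow, one_add_one_eq_two]

end Units

namespace Matrix

variable {R : Type*} [CommRing R]

theorem det_eq_det_of_rows_sub_succ {n : ℕ} (A : Matrix (Fin (n + 1)) (Fin (n + 1)) R) :
    A.det = (of (Fin.snoc (fun i : Fin n => A i.castSucc - A i.succ) (A (Fin.last n)))).det := by
  rw [← det_submatrix_equiv_self Fin.revPerm A,
    ← det_submatrix_equiv_self Fin.revPerm (of (Fin.snoc _ _))]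
  refine det_eq_of_forall_row_eq_smul_add_pred (fun _ => 1) (fun j => ?_) (fun i j => ?_)
  · simp
  · simp [Fin.rev_succ, Fin.rev_castSucc]

theorem det_eq_mul_det_submatrix_castSucc {n : ℕ} (A : Matrix (Fin (n + 1)) (Fin (n + 1)) R)
    (h : ∀ i : Fin n, A i.castSucc (Fin.last n) = 0) :
    A.det = A (Fin.last n) (Fin.last n) * (A.submatrix Fin.castSucc Fin.castSucc).det := by
  rw [det_succ_column A (Fin.last n), Fin.sum_univ_castSucc]
  simp [h, Fin.succAbove_last, ← two_mul, pow_mul]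

theorem det_of_sum_rows {n α : Type*} [Fintype n] [DecidableEq n] [DecidableEq α]
    (S : n → Finset α) (v : n → α → n → R) :
    (of fun i => ∑ m ∈ S i, v i m).det = ∑ r ∈ Fintype.piFinset S, (of fun i => v i (r i)).det :=
  detRowAlternating.toMultilinearMap.map_sum_finset v S

end Matrix

section SnocOne

variable {R : Type*} [CommRing R] {n : ℕ}

theorem Dplus_eq_det_symZpow (y : Fin n → Rˣ) (L : Fin n → ℤ) :
    Dplus y L = (Matrix.of fun i j => (y j).symZpow (L i)).det := rfl

theorem Dminus_eq_det_altZpow (y : Fin n → Rˣ) (L : Fin n → ℤ) :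
    Dminus y L = (Matrix.of fun i j => (y j).altZpow (L i)).det := rfl

theorem Dminus_snoc_one (y : Fin n → Rˣ) (ℓ : Fin (n + 1) → ℤ) :
    Dminus (Fin.snoc y 1) ℓ = 0 :=
  Matrix.det_eq_zero_of_column_eq_zero (Fin.last n) fun i => by simp

theorem Dplus_snoc_one (y : Fin n → Rˣ) (ℓ : Fin (n + 1) → ℤ)
    (hle : ∀ i : Fin n, ℓ i.succ ≤ ℓ i.castSucc)
    (hpar : ∀ i : Fin n, (ℓ i.castSucc - ℓ i.succ) % 2 = 0) :
    Dplus (Fin.snoc y 1) ℓ = 2 * (∏ j, (y j).altZpow 1) *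
      ∑ r ∈ Fintype.piFinset fun i => oddOffsetIoo (ℓ i.succ) (ℓ i.castSucc), Dminus y r := by
  set A : Matrix (Fin (n + 1)) (Fin (n + 1)) R :=
    Matrix.of fun i j => (Fin.snoc (α := fun _ => Rˣ) y 1 j).symZpow (ℓ i)
  set B : Matrix (Fin (n + 1)) (Fin (n + 1)) R :=
    Matrix.of (Fin.snoc (fun i : Fin n => A i.castSucc - A i.succ) (A (Fin.last n)))
  have hcorner : B (Fin.last n) (Fin.last n) = 2 := by simp [A, B]
  have hsub : B.submatrix Fin.castSucc Fin.castSucc = Matrix.of fun i =>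
      ∑ m ∈ oddOffsetIoo (ℓ i.succ) (ℓ i.castSucc),
        fun j => (y j).altZpow 1 * (y j).altZpow m := by
    ext i j
    simp [A, B, Units.symZpow_sub_symZpow _ (hle i) (hpar i), Finset.sum_apply]
  rw [Dplus_eq_det_symZpow, Matrix.det_eq_det_of_rows_sub_succ,
    Matrix.det_eq_mul_det_submatrix_castSucc B fun i => by simp [A, B], hcorner, hsub,
    Matrix.det_of_sum_rows, mul_assoc]
  congr 1
  rw [mul_sum]
  refine sum_congr rfl fun r _ => ?_
  rw [Dminus_eq_det_altZpow, ← Matrix.det_mul_row]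
  rfl

theorem Dplus_snoc_one_rho (y : Fin n → Rˣ) :
    Dplus (Fin.snoc y 1) (fun i : Fin (n + 1) => 2 * ((n : ℤ) - i.val)) =
      2 * (∏ j, (y j).altZpow 1) * Dminus y (fun i : Fin n => 2 * ((n : ℤ) - i.val) - 1) := by
  have hgaps : (Fintype.piFinset fun i : Fin n =>
      oddOffsetIoo (2 * ((n : ℤ) - i.succ.val)) (2 * ((n : ℤ) - i.castSucc.val))) =
      {fun i : Fin n => 2 * ((n : ℤ) - i.val) - 1} := by
    rw [← Fintype.piFinset_singleton]
    refine congrArg Fintype.piFinset (funext fun i => ?_)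
    ext m
    simp only [oddOffsetIoo, mem_filter, mem_Ioo, mem_singleton, Fin.val_succ, Fin.val_castSucc]
    omega
  rw [Dplus_snoc_one y _ (fun i => by simp only [Fin.val_succ, Fin.val_castSucc]; omega)
    (fun i => by simp only [Fin.val_succ, Fin.val_castSucc]; omega), hgaps, sum_singleton]

theorem piFinset_oddOffsetIoo_eq_map (L : Fin (n + 1) → ℤ) (hpar : ∀ i, L i % 2 = L 0 % 2) :
    (Fintype.piFinset fun i : Fin n => oddOffsetIoo (L i.succ + 2 * ((n : ℤ) - i.succ.val))
        (L i.castSucc + 2 * ((n : ℤ) - i.castSucc.val))) =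
      ((Icc (fun i : Fin n => L i.succ) fun i => L i.castSucc).filter
          fun M => ∀ i, (M i - L 0) % 2 = 0).map
        (Equiv.addRight fun i : Fin n => 2 * ((n : ℤ) - i.val) - 1).toEmbedding := by
  ext r
  simp only [Fintype.mem_piFinset, mem_map_equiv, mem_filter, mem_Icc, Pi.le_def,
    oddOffsetIoo, mem_Ioo, Equiv.coe_addRight, Equiv.addRight_symm, Pi.add_apply,
    Pi.neg_apply, Fin.val_succ, Fin.val_castSucc, ← forall_and]
  refine forall_congr' fun i => ?_
  have := hpar i.succ
  have := hpar i.castSucc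
  push_cast
  omega

end SnocOne

/-- `λ = L/2` and `μ = M/2` are encoded by doubled integer tuples, the characters by `D^±` in the
square-root variables `y i = x_i^{1/2}`, and the restriction `x_{n+1} = 1` by `Fin.snoc y 1`. -/
theorem spin_even_odd_branching_general {F : Type*} [Field F] (n : ℕ)
    (y : Fin n → Fˣ) (L : Fin (n + 1) → ℤ) (hL : Antitone L)
    (hpar : ∀ i, L i % 2 = L 0 % 2)
    (hDden : Dplus (Fin.snoc y 1) (fun i : Fin (n + 1) => 2 * ((n : ℤ) - i.val)) ≠ 0) :
    ((1 / 2 : F) *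
        (Dminus (Fin.snoc y 1) (fun i : Fin (n + 1) => L i + 2 * ((n : ℤ) - i.val)) +
          Dplus (Fin.snoc y 1) (fun i : Fin (n + 1) => L i + 2 * ((n : ℤ) - i.val)))) /
        ((1 / 2 : F) * Dplus (Fin.snoc y 1) (fun i : Fin (n + 1) => 2 * ((n : ℤ) - i.val))) =
      ∑ M ∈ (Finset.Icc (fun i : Fin n => L i.succ) fun i => L i.castSucc).filter
          (fun M => ∀ i, (M i - L 0) % 2 = 0),
        Dminus y (fun i : Fin n => M i + 2 * ((n : ℤ) - i.val) - 1) /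
          Dminus y (fun i : Fin n => 2 * ((n : ℤ) - i.val) - 1) := by
  have hnum := Dplus_snoc_one y (fun i => L i + 2 * ((n : ℤ) - i.val))
    (fun i => by
      have := hL (Fin.castSucc_lt_succ (i := i)).le
      simp only [Fin.val_succ, Fin.val_castSucc]
      omega)
    (fun i => by
      have := hpar i.succ
      have := hpar i.castSucc
      simp only [Fin.val_succ, Fin.val_castSucc]
      omega)
  rw [Dplus_snoc_one_rho] at hDden
  have h2P : (2 : F) * ∏ j, (y j).altZpow 1 ≠ 0 := left_ne_zero_of_mul hDden
  have h2 : (1 / 2 : F) ≠ 0 := one_div_ne_zero (left_ne_zero_of_mul h2P)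
  rw [Dminus_snoc_one, zero_add, hnum, Dplus_snoc_one_rho, mul_div_mul_left _ _ h2,
    mul_div_mul_left _ _ h2P, piFinset_oddOffsetIoo_eq_map L hpar, sum_map, sum_div]
  refine sum_congr rfl fun M _ => ?_
  congr 2
  funext i
  simp only [Equiv.coe_toEmbedding, Equiv.coe_addRight, Pi.add_apply]
  ring

/-- Branching rule for `Spin(2(n+1)) ⊇ Spin(2n+1)`: for a dominant weight
`λ = L/2` (all integers or all half-integers, encoded by the doubled integer tuple `L`
of constant parity with `L` weakly decreasing and `L_{n+1} ≥ 0`),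
`χ^{D_{n+1}}_λ|_{x_{n+1}=1} = ∑_{μ ⪯ λ} χ^{B_n}_μ`, where the sum is over dominant
weights `μ = M/2` of the same parity interlacing `λ`.  Characters are written via
`D^±` in the square-root variables `y i = x_i^{1/2}` (with `x_{n+1} = 1` built in via
`Fin.snoc y 1`); `ρ_{D_{n+1}} = (n, …, 0)` and `ρ_{B_n} = (n - 1/2, …, 1/2)`. -/
theorem spin_even_odd_branching {F : Type*} [Field F] [CharZero F] (n : ℕ)
    (y : Fin n → Fˣ) (L : Fin (n + 1) → ℤ) (hL : Antitone L) (hLn : 0 ≤ L (Fin.last n))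
    (hpar : ∀ i, L i % 2 = L 0 % 2)
    (hDden : Dplus (Fin.snoc y 1) (fun i : Fin (n + 1) => 2 * ((n : ℤ) - i.val)) ≠ 0)
    (hBden : Dminus y (fun i : Fin n => 2 * ((n : ℤ) - i.val) - 1) ≠ 0) :
    ((1 / 2 : F) *
        (Dminus (Fin.snoc y 1) (fun i : Fin (n + 1) => L i + 2 * ((n : ℤ) - i.val)) +
          Dplus (Fin.snoc y 1) (fun i : Fin (n + 1) => L i + 2 * ((n : ℤ) - i.val)))) /
        ((1 / 2 : F) * Dplus (Fin.snoc y 1) (fun i : Fin (n + 1) => 2 * ((n : ℤ) - i.val))) =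
      ∑ M ∈ (Finset.Icc (fun i : Fin n => L i.succ) fun i => L i.castSucc).filter
          (fun M => ∀ i, (M i - L 0) % 2 = 0),
        Dminus y (fun i : Fin n => M i + 2 * ((n : ℤ) - i.val) - 1) /
          Dminus y (fun i : Fin n => 2 * ((n : ℤ) - i.val) - 1) :=
  spin_even_odd_branching_general n y L hL hpar hDden
end
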